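/- Let 0 < a < 1 be a real number. Then (1 − a)·(1/a + π²/6 − 1) < ψ(1) − ψ(a) < (1 − a)·(1/a + 1). -/

import Mathlib

/-! Log-convexity of `Γ` makes `ψ` increasing on `(0, ∞)`; together with
`ψ (x + 1) = ψ x + 1 / x` this squeezes `ψ (b + n) - ψ (a + n)` to `0` and gives
`ψ 1 - ψ a = ∑ₖ (1 / (a + k) - 1 / (1 + k)) = ∑ₖ (1 - a) / ((a + k) (1 + k))`.
The `k = 0` term is `(1 - a) / a`, and for `k ≥ 1` the term lies strictly between
`(1 - a) / (k + 1)²` and `(1 - a) / (k (k + 1))`, whose sums are `(1 - a) (π² / 6 - 1)`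
and `1 - a`. -/

open scoped Real

/-- The digamma function `ψ(x) = Γ'(x)/Γ(x)`. -/
noncomputable def digamma (x : ℝ) : ℝ := deriv Real.Gamma x / Real.Gamma x

open Filter Finset Topology

lemma hasDerivAt_log_Gamma {x : ℝ} (hx : 0 < x) :
    HasDerivAt (Real.log ∘ Real.Gamma) (digamma x) x :=
  (Real.differentiableAt_Gamma fun m =>
    ((neg_nonpos.2 m.cast_nonneg).trans_lt hx).ne').hasDerivAt.log (Real.Gamma_pos_of_pos hx).ne'

lemma digamma_add_one {x : ℝ} (hx : 0 < x) : digamma (x + 1) = digamma x + 1 / x := by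
  have hshift : HasDerivAt (fun y => (Real.log ∘ Real.Gamma) (y + 1)) (digamma (x + 1)) x :=
    (hasDerivAt_log_Gamma (by linarith)).comp_add_const x 1
  have hsplit : HasDerivAt (Real.log ∘ Real.Gamma + Real.log) (digamma x + 1 / x) x := by
    simpa only [one_div] using (hasDerivAt_log_Gamma hx).add (Real.hasDerivAt_log hx.ne')
  refine hshift.unique (hsplit.congr_of_eventuallyEq ?_)
  filter_upwards [eventually_gt_nhds hx] with y hy
  simp only [Function.comp_apply, Pi.add_apply]
  rw [Real.Gamma_add_one hy.ne', Real.log_mul hy.ne' (Real.Gamma_pos_of_pos hy).ne', add_comm]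

lemma digamma_monotoneOn : MonotoneOn digamma (Set.Ioi 0) :=
  (Real.convexOn_log_Gamma.monotoneOn_deriv fun _ hx =>
    (hasDerivAt_log_Gamma hx).differentiableAt).congr fun _ hx => (hasDerivAt_log_Gamma hx).deriv

lemma digamma_add_nat {x : ℝ} (hx : 0 < x) (n : ℕ) :
    digamma (x + n) = digamma x + ∑ k ∈ range n, 1 / (x + k) := by
  induction n with
  | zero => simp
  | succ n ih =>
    rw [Nat.cast_succ, ← add_assoc, digamma_add_one (by positivity), ih, sum_range_succ,
      add_assoc]

lemma tendsto_digamma_add_nat_sub {a b : ℝ} (ha : 0 < a) (hab : a ≤ b) :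
    Tendsto (fun n : ℕ => digamma (b + n) - digamma (a + n)) atTop (𝓝 0) := by
  set m := ⌈b - a⌉₊
  have hbound : ∀ n : ℕ, digamma (b + n) - digamma (a + n) ≤ m / (a + n) := by
    intro n
    have hpos : 0 < a + n := by positivity
    have hle : digamma (b + n) ≤ digamma (a + n + m) :=
      digamma_monotoneOn (by simp only [Set.mem_Ioi]; linarith)
        (by simp only [Set.mem_Ioi]; positivity) (by linarith [Nat.le_ceil (b - a)])
    have hsum : ∑ k ∈ range m, 1 / (a + n + k) ≤ m / (a + n) :=
      calc ∑ k ∈ range m, 1 / (a + n + k) ≤ ∑ _k ∈ range m, 1 / (a + n) :=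
            sum_le_sum fun k _ =>
              one_div_le_one_div_of_le hpos (le_add_of_nonneg_right k.cast_nonneg)
        _ = m / (a + n) := by rw [sum_const, card_range, nsmul_eq_mul, mul_one_div]
    rw [digamma_add_nat hpos] at hle
    linarith
  have hnonneg : ∀ n : ℕ, 0 ≤ digamma (b + n) - digamma (a + n) := fun n =>
    sub_nonneg.2 <| digamma_monotoneOn (by simp only [Set.mem_Ioi]; positivity)
      (by simp only [Set.mem_Ioi]; linarith [n.cast_nonneg (α := ℝ)]) (by linarith)
  exact squeeze_zero hnonneg hbound <| tendsto_const_nhds.div_atTop <|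
    tendsto_atTop_add_const_left _ a (tendsto_natCast_atTop_atTop (R := ℝ))

lemma hasSum_digamma_sub {a b : ℝ} (ha : 0 < a) (hab : a ≤ b) :
    HasSum (fun k : ℕ => 1 / (a + k) - 1 / (b + k)) (digamma b - digamma a) := by
  have hnonneg : ∀ k : ℕ, 0 ≤ 1 / (a + k) - 1 / (b + k) := fun k => sub_nonneg.2 (by gcongr)
  have hpartial : ∀ n : ℕ, ∑ k ∈ range n, (1 / (a + k) - 1 / (b + k)) =
      digamma b - digamma a - (digamma (b + n) - digamma (a + n)) := by
    intro n
    rw [sum_sub_distrib, digamma_add_nat ha, digamma_add_nat (ha.trans_le hab)]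
    ring
  rw [hasSum_iff_tendsto_nat_of_nonneg hnonneg]
  simpa only [hpartial, sub_zero] using
    tendsto_const_nhds.sub (tendsto_digamma_add_nat_sub ha hab)

lemma hasSum_one_div_nat_add_two_sq :
    HasSum (fun k : ℕ => 1 / ((k : ℝ) + 2) ^ 2) (π ^ 2 / 6 - 1) := by
  have h := (hasSum_nat_add_iff' 2).2 hasSum_zeta_two
  norm_num [sum_range_succ] at h
  simpa only [one_div] using h

lemma hasSum_one_div_nat_add_one_mul_nat_add_two :
    HasSum (fun k : ℕ => 1 / (((k : ℝ) + 1) * ((k : ℝ) + 2))) 1 := by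
  have h := hasSum_digamma_sub one_pos one_le_two
  rw [show (2 : ℝ) = 1 + 1 by norm_num, digamma_add_one one_pos] at h
  convert h using 1
  · ext k
    field_simp
    ring
  · ring

lemma one_div_add_sub_one_div_one_add {a x : ℝ} (hax : a + x ≠ 0) (hx : 1 + x ≠ 0) :
    1 / (a + x) - 1 / (1 + x) = (1 - a) / ((a + x) * (1 + x)) := by
  field_simp
  ring

lemma div_one_add_sq_lt_one_div_add_sub {a x : ℝ} (ha1 : a < 1) (hx : 0 < a + x) :
    (1 - a) / (1 + x) ^ 2 < 1 / (a + x) - 1 / (1 + x) := by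
  have h1x : 0 < 1 + x := by linarith
  rw [one_div_add_sub_one_div_one_add hx.ne' h1x.ne', sq]
  exact div_lt_div_of_pos_left (sub_pos.2 ha1) (by positivity)
    (mul_lt_mul_of_pos_right (by linarith) h1x)

lemma one_div_add_sub_lt_div_mul_one_add {a x : ℝ} (ha0 : 0 < a) (ha1 : a < 1) (hx : 0 < x) :
    1 / (a + x) - 1 / (1 + x) < (1 - a) / (x * (1 + x)) := by
  have h1x : 0 < 1 + x := by linarith
  rw [one_div_add_sub_one_div_one_add (by positivity) h1x.ne']
  exact div_lt_div_of_pos_left (sub_pos.2 ha1) (by positivity)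
    (mul_lt_mul_of_pos_right (by linarith) h1x)

theorem stmt18 (a : ℝ) (ha0 : 0 < a) (ha1 : a < 1) :
    (1 - a) * (1/a + π^2/6 - 1) < digamma 1 - digamma a ∧
    digamma 1 - digamma a < (1 - a) * (1/a + 1) := by
  have htail := (hasSum_nat_add_iff' 1).2 (hasSum_digamma_sub ha0 ha1.le)
  simp only [sum_range_one, Nat.cast_zero, add_zero, Nat.cast_add_one] at htail
  have hlow : HasSum (fun k : ℕ => (1 - a) / (1 + ((k : ℝ) + 1)) ^ 2)
      ((1 - a) * (π ^ 2 / 6 - 1)) :=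
    (hasSum_one_div_nat_add_two_sq.mul_left (1 - a)).congr_fun fun k => by ring
  have hup : HasSum (fun k : ℕ => (1 - a) / (((k : ℝ) + 1) * (1 + ((k : ℝ) + 1))))
      ((1 - a) * 1) :=
    (hasSum_one_div_nat_add_one_mul_nat_add_two.mul_left (1 - a)).congr_fun fun k => by ring
  have hlt_low := hasSum_lt (i := 0)
    (fun k => (div_one_add_sq_lt_one_div_add_sub ha1 (by positivity)).le)
    (div_one_add_sq_lt_one_div_add_sub ha1 (by positivity)) hlow htail
  have hlt_up := hasSum_lt (i := 0)
    (fun k => (one_div_add_sub_lt_div_mul_one_add ha0 ha1 (by positivity)).le)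
    (one_div_add_sub_lt_div_mul_one_add ha0 ha1 (by positivity)) htail hup
  have hfirst : (1 - a) * (1 / a) = 1 / a - 1 := by field_simp
  constructor <;> linarith
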